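/- arXiv:2502.16011 — 5 statements merged into one kernel-verified Lean document; each statement's English description precedes it below -/
import Mathlib

section
/- Lefschetz zeta function of a diagonal map on a wedge sum: in the diagonal algebraic model, the identity ζ_f(t) = (1 − t)^{s−1} · ∏_{i=1}^s ζ_{f_ii}(t) holds in the ring ℚ[[t]] of formal power series. -/
/-!
Write `L(f^m) = 1 + ∑ᵢ ℓᵢ(m)` and `L(f_ii^m) = 1 + ℓᵢ(m)`. The zeta function turns sums of
Lefschetz sequences into products, and the constant sequence `1` has zeta function
`exp(∑ t^m/m) = 1/(1 - t)`; so the right-hand side contains `s - 1` surplus factors `1/(1 - t)`,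
which `(1 - t)^{s-1}` cancels. Both facts about `exp` follow from the differential equation
`E' = f' E`, which determines `E = exp(f)` once `E(0) = 1`.
-/

/-- The exponential `exp(f) = ∑_{j ≥ 0} f^j / j!` of a formal power series `f ∈ ℚ[[t]]`
(intended for series with zero constant term, for which each coefficient of `exp(f)` is
the corresponding coefficient of the finite sum `∑_{j=0}^n f^j / j!`). -/
noncomputable def expPS (f : PowerSeries ℚ) : PowerSeries ℚ :=
  PowerSeries.mk fun n =>
    PowerSeries.coeff n (∑ j ∈ Finset.range (n + 1), (j.factorial : ℚ)⁻¹ • f ^ j)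

/-- The Lefschetz zeta function `ζ(t) = exp(∑_{m ≥ 1} L(m)·t^m/m) ∈ ℚ[[t]]` associated with a
sequence of Lefschetz numbers `L : ℕ → ℚ` (the value `L 0` is irrelevant). -/
noncomputable def lefschetzZeta (L : ℕ → ℚ) : PowerSeries ℚ :=
  expPS (PowerSeries.mk fun m => if m = 0 then 0 else L m / (m : ℚ))

open PowerSeries Finset

namespace PowerSeries

theorem eq_zero_of_derivative_eq_mul {R : Type*} [CommRing R] [IsAddTorsionFree R]
    {h c : R⟦X⟧} (hc : d⁄dX R c = h * c) (h0 : constantCoeff c = 0) : c = 0 := by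
  -- `X ^ n ∣ c` gives `X ^ n ∣ h * c = c'`, which kills the `n`-th coefficient of `c`.
  have hdvd : ∀ n, X ^ n ∣ c := by
    intro n
    induction n with
    | zero => simp
    | succ n ih =>
      refine X_pow_dvd_iff.mpr fun m hm => ?_
      rcases Nat.lt_succ_iff_lt_or_eq.mp hm with hm | rfl
      · exact X_pow_dvd_iff.mp ih m hm
      cases m with
      | zero => simpa using h0
      | succ k =>
        have hk := congrArg (coeff k) hc
        rw [coeff_derivative, X_pow_dvd_iff.mp (dvd_mul_of_dvd_right ih h) k (by omega),
          mul_comm, ← Nat.cast_succ, ← nsmul_eq_mul] at hk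
        exact IsAddTorsionFree.nsmul_right_injective k.succ_ne_zero (by simpa using hk)
  ext n
  simpa using X_pow_dvd_iff.mp (hdvd (n + 1)) n n.lt_succ_self

theorem eq_of_derivative_eq_mul {R : Type*} [CommRing R] [IsAddTorsionFree R]
    {h a b : R⟦X⟧} (ha : d⁄dX R a = h * a) (hb : d⁄dX R b = h * b)
    (h0 : constantCoeff a = constantCoeff b) : a = b :=
  sub_eq_zero.mp <| eq_zero_of_derivative_eq_mul (h := h)
    (by rw [map_sub, ha, hb, mul_sub]) (by rw [map_sub, h0, sub_self])

end PowerSeries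

section expPS

variable {f g : ℚ⟦X⟧}

theorem expPS_eq_subst (hf : constantCoeff f = 0) : expPS f = (exp ℚ).subst f := by
  ext n
  rw [coeff_subst' (HasSubst.of_constantCoeff_zero' hf), expPS, coeff_mk, map_sum,
    finsum_eq_sum_of_support_subset (s := range (n + 1))]
  · refine sum_congr rfl fun j _ => ?_
    simp [coeff_exp]
  · intro j hj
    contrapose! hj
    simp only [coe_range, Set.mem_Iio, not_lt, Nat.succ_le_iff] at hj
    simp [X_pow_dvd_iff.mp (pow_dvd_pow_of_dvd (X_dvd_iff.mpr hf) j) n hj]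

theorem constantCoeff_expPS (f : ℚ⟦X⟧) : constantCoeff (expPS f) = 1 := by
  rw [← coeff_zero_eq_constantCoeff_apply, expPS, coeff_mk, zero_add, sum_range_one]
  simp

theorem derivative_expPS (hf : constantCoeff f = 0) :
    d⁄dX ℚ (expPS f) = d⁄dX ℚ f * expPS f := by
  rw [expPS_eq_subst hf, derivative_subst (HasSubst.of_constantCoeff_zero' hf), derivative_exp,
    mul_comm]

theorem expPS_zero : expPS 0 = 1 :=
  derivative.ext (by rw [derivative_expPS (map_zero _), map_zero, zero_mul, derivative_one])
    (by rw [constantCoeff_expPS, map_one])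

theorem expPS_add (hf : constantCoeff f = 0) (hg : constantCoeff g = 0) :
    expPS (f + g) = expPS f * expPS g := by
  refine eq_of_derivative_eq_mul (h := d⁄dX ℚ (f + g))
    (derivative_expPS (by rw [map_add, hf, hg, add_zero])) ?_ (by simp [constantCoeff_expPS])
  rw [Derivation.leibniz, derivative_expPS hf, derivative_expPS hg, map_add, smul_eq_mul,
    smul_eq_mul]
  ring

end expPS

noncomputable def lefschetzLogSeries (L : ℕ → ℚ) : ℚ⟦X⟧ :=
  mk fun m => if m = 0 then 0 else L m / (m : ℚ)

theorem lefschetzZeta_eq_expPS (L : ℕ → ℚ) : lefschetzZeta L = expPS (lefschetzLogSeries L) :=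
  rfl

theorem constantCoeff_lefschetzLogSeries (L : ℕ → ℚ) :
    constantCoeff (lefschetzLogSeries L) = 0 := by
  simp [lefschetzLogSeries, ← coeff_zero_eq_constantCoeff_apply]

theorem lefschetzLogSeries_add (L L' : ℕ → ℚ) :
    lefschetzLogSeries (L + L') = lefschetzLogSeries L + lefschetzLogSeries L' := by
  ext m
  by_cases hm : m = 0 <;> simp [lefschetzLogSeries, hm, add_div]

theorem lefschetzZeta_zero : lefschetzZeta 0 = 1 := by
  rw [lefschetzZeta_eq_expPS, ← expPS_zero]
  congr 1
  ext m
  simp [lefschetzLogSeries]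

theorem lefschetzZeta_add (L L' : ℕ → ℚ) :
    lefschetzZeta (L + L') = lefschetzZeta L * lefschetzZeta L' := by
  simp only [lefschetzZeta_eq_expPS, lefschetzLogSeries_add,
    expPS_add (constantCoeff_lefschetzLogSeries L) (constantCoeff_lefschetzLogSeries L')]

theorem lefschetzZeta_sum {ι : Type*} (u : Finset ι) (L : ι → ℕ → ℚ) :
    lefschetzZeta (∑ i ∈ u, L i) = ∏ i ∈ u, lefschetzZeta (L i) := by
  induction u using Finset.cons_induction with
  | empty => simp [lefschetzZeta_zero]
  | cons a u ha ih => rw [sum_cons, prod_cons, lefschetzZeta_add, ih]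

theorem derivative_lefschetzLogSeries_one :
    d⁄dX ℚ (lefschetzLogSeries 1) = PowerSeries.mk 1 := by
  ext n
  rw [coeff_derivative, lefschetzLogSeries, coeff_mk, coeff_mk, if_neg n.succ_ne_zero,
    Pi.one_apply, Pi.one_apply]
  push_cast
  field_simp

theorem one_sub_X_mul_lefschetzZeta_one : (1 - X) * lefschetzZeta 1 = 1 := by
  refine derivative.ext ?_ (by simp [lefschetzZeta_eq_expPS, constantCoeff_expPS])
  rw [Derivation.leibniz, lefschetzZeta_eq_expPS,
    derivative_expPS (constantCoeff_lefschetzLogSeries 1), derivative_lefschetzLogSeries_one,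
    smul_eq_mul, ← mul_assoc, mul_comm (1 - X), mk_one_mul_one_sub_eq_one]
  simp

theorem stmt2_general (s N : ℕ) (hs : 1 ≤ s)
    (V : Fin s → Fin N → Type*)
    [∀ i k, AddCommGroup (V i k)] [∀ i k, Module ℚ (V i k)]
    (A : ∀ i k, V i k →ₗ[ℚ] V i k)
    (L : ℕ → ℚ)
    (hL : ∀ m, L m =
      1 + ∑ k : Fin N, (-1 : ℚ) ^ ((k : ℕ) + 1) *
        ∑ i : Fin s, LinearMap.trace ℚ (V i k) ((A i k) ^ m))
    (Lc : Fin s → ℕ → ℚ)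
    (hLc : ∀ i m, Lc i m =
      1 + ∑ k : Fin N, (-1 : ℚ) ^ ((k : ℕ) + 1) *
        LinearMap.trace ℚ (V i k) ((A i k) ^ m)) :
    lefschetzZeta L =
      (1 - PowerSeries.X) ^ (s - 1) * ∏ i : Fin s, lefschetzZeta (Lc i) := by
  set ℓ : Fin s → ℕ → ℚ := fun i m =>
    ∑ k : Fin N, (-1 : ℚ) ^ ((k : ℕ) + 1) * LinearMap.trace ℚ (V i k) ((A i k) ^ m)
  have hLc' : ∀ i, Lc i = 1 + ℓ i := fun i => funext (hLc i)
  have hL' : L = 1 + ∑ i, ℓ i := by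
    funext m
    simp only [hL, ℓ, Pi.add_apply, Pi.one_apply, Finset.sum_apply, mul_sum]
    rw [sum_comm]
  have hpow : lefschetzZeta 1 ^ s = lefschetzZeta 1 ^ (s - 1) * lefschetzZeta 1 := by
    rw [← pow_succ, Nat.sub_add_cancel hs]
  simp only [hL', hLc', lefschetzZeta_add, lefschetzZeta_sum, prod_mul_distrib, prod_const,
    card_univ, Fintype.card_fin, hpow]
  rw [← mul_assoc, ← mul_assoc, ← mul_pow, one_sub_X_mul_lefschetzZeta_one, one_pow, one_mul]

/-- **Lefschetz zeta function of a diagonal map on a wedge sum.**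
In the diagonal algebraic model (`A i k` is the endomorphism induced on the `k`-th rational
homology by the coordinate map `f_ii : X_i → X_i`), with Lefschetz numbers
`L m = 1 + ∑_{k=1}^N (-1)^k ∑_{i=1}^s tr(A_{i,k}^m)` and
`Lc i m = 1 + ∑_{k=1}^N (-1)^k tr(A_{i,k}^m)`, the zeta functions
`ζ_f = exp(∑_{m≥1} L(f^m) t^m/m)` and `ζ_{f_ii} = exp(∑_{m≥1} L(f_ii^m) t^m/m)` satisfy
`ζ_f(t) = (1 − t)^{s−1} · ∏_{i=1}^s ζ_{f_ii}(t)` in `ℚ[[t]]`. -/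
theorem stmt2 (s N : ℕ) (hs : 1 ≤ s) (hN : 1 ≤ N)
    (V : Fin s → Fin N → Type*)
    [∀ i k, AddCommGroup (V i k)] [∀ i k, Module ℚ (V i k)]
    [∀ i k, FiniteDimensional ℚ (V i k)]
    (A : ∀ i k, V i k →ₗ[ℚ] V i k)
    (L : ℕ → ℚ)
    (hL : ∀ m, L m =
      1 + ∑ k : Fin N, (-1 : ℚ) ^ ((k : ℕ) + 1) *
        ∑ i : Fin s, LinearMap.trace ℚ (V i k) ((A i k) ^ m))
    (Lc : Fin s → ℕ → ℚ)
    (hLc : ∀ i m, Lc i m =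
      1 + ∑ k : Fin N, (-1 : ℚ) ^ ((k : ℕ) + 1) *
        LinearMap.trace ℚ (V i k) ((A i k) ^ m)) :
    lefschetzZeta L =
      (1 - PowerSeries.X) ^ (s - 1) * ∏ i : Fin s, lefschetzZeta (Lc i) :=
  stmt2_general s N hs V A L hL Lc hLc
end

section
/- Dold coefficients of a cyclic permutative map on a wedge sum: in the cyclic algebraic model, (a) for every m ≥ 1 one has ℓ(f^{sm}) = ∑_{j=1}^s ℓ(f_jj^{sm}), and (b) ℓ(f^m) = 0 whenever m > 1 and m is not divisible by s. -/
/-!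
The endomorphism `F_k^r` carries the summand `i` into the summand `σ^r i`, so its diagonal blocks
vanish unless `s ∣ r`. As the trace of an endomorphism of a finite product is the sum of the traces
of its diagonal blocks, `L(f^r) = 1` whenever `s ∤ r`, and `∑_j L(f_jj^r) = L(f^r) + (s - 1)` for
every `r`. Möbius inversion annihilates constants except at `1` (`∑_{r ∣ n} μ(n/r) = [n = 1]`),
which gives (b), and gives (a) up to the term `(s - 1)·[s m = 1]`, which vanishes since `s m = 1`
forces `s = 1`.
-/

open LinearMap Finset

section BlockPermutation

variable {R ι : Type*} [Semiring R] [DecidableEq ι] {M : ι → Type*}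
  [∀ i, AddCommMonoid (M i)] [∀ i, Module R (M i)]

def IsBlockPermutation (σ : Equiv.Perm ι) (F : Module.End R (Π i, M i)) : Prop :=
  ∀ i (v : M i), ∃ w, F (Pi.single i v) = Pi.single (σ i) w

variable {σ : Equiv.Perm ι} {F : Module.End R (Π i, M i)}

theorem IsBlockPermutation.pow (hF : IsBlockPermutation σ F) (n : ℕ) :
    IsBlockPermutation (σ ^ n) (F ^ n) := by
  induction n with
  | zero => exact fun i v => ⟨v, rfl⟩
  | succ n ih =>
    intro i v
    obtain ⟨w, hw⟩ := hF i v
    obtain ⟨w', hw'⟩ := ih (σ i) w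
    simp only [pow_succ, Module.End.mul_apply, hw, hw']
    exact ⟨w', rfl⟩

theorem IsBlockPermutation.proj_comp_comp_single_eq_zero (hF : IsBlockPermutation σ F) {i : ι}
    (hi : σ i ≠ i) : proj i ∘ₗ F ∘ₗ single R M i = 0 := by
  ext v
  obtain ⟨w, hw⟩ := hF i v
  simp [hw, Pi.single_eq_of_ne' hi]

end BlockPermutation

section Trace

variable {R ι : Type*} [CommRing R] [Fintype ι] [DecidableEq ι] {M : ι → Type*}
  [∀ i, AddCommGroup (M i)] [∀ i, Module R (M i)] [∀ i, Module.Free R (M i)]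
  [∀ i, Module.Finite R (M i)]

theorem LinearMap.trace_pi_eq_sum_trace_proj_comp_comp_single (T : Module.End R (Π i, M i)) :
    trace R (Π i, M i) T = ∑ i, trace R (M i) (proj i ∘ₗ T ∘ₗ single R M i) := by
  have hT : ∑ i, (T ∘ₗ single R M i) ∘ₗ proj i = T := (lsum R M R).apply_symm_apply T
  conv_lhs => rw [← hT]
  rw [map_sum]
  exact Finset.sum_congr rfl fun i _ => trace_comp_comm' _ _

theorem IsBlockPermutation.trace_eq_zero {σ : Equiv.Perm ι} {F : Module.End R (Π i, M i)}
    (hF : IsBlockPermutation σ F) (hσ : ∀ i, σ i ≠ i) : trace R (Π i, M i) F = 0 := by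
  rw [trace_pi_eq_sum_trace_proj_comp_comp_single]
  exact Finset.sum_eq_zero fun i _ => by rw [hF.proj_comp_comp_single_eq_zero (hσ i), map_zero]

end Trace

theorem ArithmeticFunction.sum_divisors_moebius_div {R : Type*} [Ring R] (n : ℕ) :
    ∑ r ∈ n.divisors, ((moebius (n / r) : ℤ) : R) = if n = 1 then 1 else 0 := by
  rw [Nat.sum_div_divisors n fun d => ((moebius d : ℤ) : R), ← one_apply,
    ← coe_moebius_mul_coe_zeta, coe_mul_zeta_apply]
  simp only [intCoe_apply]

theorem ArithmeticFunction.sum_divisors_moebius_div_mul_const_add {R : Type*} [Ring R] (n : ℕ)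
    (c : R) (f : ℕ → R) :
    ∑ r ∈ n.divisors, ((moebius (n / r) : ℤ) : R) * (c + f r)
      = (if n = 1 then c else 0) + ∑ r ∈ n.divisors, ((moebius (n / r) : ℤ) : R) * f r := by
  simp only [mul_add, sum_add_distrib, ← sum_mul, sum_divisors_moebius_div, ite_mul, one_mul,
    zero_mul]


theorem stmt7_general (s N : ℕ)
    (σ : Equiv.Perm (Fin s))
    (hσ : ∀ (i : Fin s) (m : ℕ), (σ ^ m) i = i ↔ s ∣ m)
    (V : Fin s → Fin N → Type*)
    [∀ i k, AddCommGroup (V i k)] [∀ i k, Module ℚ (V i k)]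
    [∀ i k, FiniteDimensional ℚ (V i k)]
    (A : ∀ i k, V i k →ₗ[ℚ] V (σ i) k)
    (F : ∀ k, (Π i, V i k) →ₗ[ℚ] (Π i, V i k))
    (hF : ∀ k (i : Fin s) (v : V i k), F k (Pi.single i v) = Pi.single (σ i) (A i k v))
    (L : ℕ → ℚ)
    (hL : ∀ m, L m =
      1 + ∑ k : Fin N, (-1 : ℚ) ^ ((k : ℕ) + 1) *
        LinearMap.trace ℚ (Π i, V i k) ((F k) ^ m))
    (Lc : Fin s → ℕ → ℚ)
    (hLc : ∀ i m, Lc i m =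
      1 + ∑ k : Fin N, (-1 : ℚ) ^ ((k : ℕ) + 1) *
        LinearMap.trace ℚ (V i k)
          ((LinearMap.proj i) ∘ₗ ((F k) ^ m) ∘ₗ (LinearMap.single ℚ (fun j => V j k) i)))
    (ℓ : ℕ → ℚ)
    (hℓ : ∀ m, ℓ m = ∑ r ∈ m.divisors, ((ArithmeticFunction.moebius (m / r) : ℤ) : ℚ) * L r)
    (ℓc : Fin s → ℕ → ℚ)
    (hℓc : ∀ i m, ℓc i m =
      ∑ r ∈ m.divisors, ((ArithmeticFunction.moebius (m / r) : ℤ) : ℚ) * Lc i r) :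
    (∀ m, 1 ≤ m → ℓ (s * m) = ∑ j : Fin s, ℓc j (s * m)) ∧
    (∀ m, 1 < m → ¬ s ∣ m → ℓ m = 0) := by
  have hblock : ∀ k, IsBlockPermutation σ (F k) := fun k i v => ⟨A i k v, hF k i v⟩
  have hLc_sum : ∀ r, ∑ j, Lc j r = (s - 1 : ℚ) + L r := by
    intro r
    simp only [hLc, hL, sum_add_distrib, sum_const, card_univ, Fintype.card_fin, nsmul_one]
    rw [sum_comm]
    simp only [← mul_sum, ← trace_pi_eq_sum_trace_proj_comp_comp_single]
    ring
  refine ⟨fun m _ => ?_, fun m hm hsm => ?_⟩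
  · have hdiv : ∑ j, ℓc j (s * m) = (if s * m = 1 then (s - 1 : ℚ) else 0) + ℓ (s * m) := by
      simp only [hℓc, hℓ]
      rw [sum_comm]
      simp only [← mul_sum, hLc_sum, ArithmeticFunction.sum_divisors_moebius_div_mul_const_add]
    rw [hdiv]
    split_ifs with h
    · simp [Nat.eq_one_of_mul_eq_one_right h]
    · simp
  · have hL_one : ∀ r ∈ m.divisors, L r = 1 := by
      intro r hr
      have hfix : ∀ i, (σ ^ r) i ≠ i := fun i h =>
        hsm (((hσ i r).mp h).trans (Nat.dvd_of_mem_divisors hr))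
      simp [hL, ((hblock _).pow r).trace_eq_zero hfix]
    rw [hℓ, sum_congr rfl fun r hr => by rw [hL_one r hr, mul_one],
      ArithmeticFunction.sum_divisors_moebius_div, if_neg hm.ne']

/-- **Dold coefficients of a cyclic permutative squared-by-blocks map on a wedge sum.**
In the cyclic algebraic model (`σ` a single `s`-cycle, `F k` the block-permutation
endomorphism of `⊕_i V i k` built from the maps `A i k : V i k → V (σ i) k`), with
Lefschetz numbers `L m = 1 + ∑_{k=1}^N (-1)^k tr(F_k^m)`,
`Lc i m = 1 + ∑_{k=1}^N (-1)^k tr(π_{i,k} ∘ F_k^m ∘ ι_{i,k})`, and Dold coefficients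
`ℓ(f^m) = ∑_{r∣m} μ(m/r)·L(f^r)`, `ℓ(f_ii^m) = ∑_{r∣m} μ(m/r)·L(f_ii^r)`:
(a) `ℓ(f^{sm}) = ∑_{j=1}^s ℓ(f_jj^{sm})` for every `m ≥ 1`, and
(b) `ℓ(f^m) = 0` whenever `m > 1` and `s ∤ m`. -/
theorem stmt7 (s N : ℕ) (hs : 1 ≤ s) (hN : 1 ≤ N)
    (σ : Equiv.Perm (Fin s))
    (hσ : ∀ (i : Fin s) (m : ℕ), (σ ^ m) i = i ↔ s ∣ m)
    (V : Fin s → Fin N → Type*)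
    [∀ i k, AddCommGroup (V i k)] [∀ i k, Module ℚ (V i k)]
    [∀ i k, FiniteDimensional ℚ (V i k)]
    (hdim : ∀ (i i' : Fin s) (k : Fin N),
      Module.finrank ℚ (V i k) = Module.finrank ℚ (V i' k))
    (A : ∀ i k, V i k →ₗ[ℚ] V (σ i) k)
    (F : ∀ k, (Π i, V i k) →ₗ[ℚ] (Π i, V i k))
    (hF : ∀ k (i : Fin s) (v : V i k), F k (Pi.single i v) = Pi.single (σ i) (A i k v))
    (L : ℕ → ℚ)
    (hL : ∀ m, L m =
      1 + ∑ k : Fin N, (-1 : ℚ) ^ ((k : ℕ) + 1) *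
        LinearMap.trace ℚ (Π i, V i k) ((F k) ^ m))
    (Lc : Fin s → ℕ → ℚ)
    (hLc : ∀ i m, Lc i m =
      1 + ∑ k : Fin N, (-1 : ℚ) ^ ((k : ℕ) + 1) *
        LinearMap.trace ℚ (V i k)
          ((LinearMap.proj i) ∘ₗ ((F k) ^ m) ∘ₗ (LinearMap.single ℚ (fun j => V j k) i)))
    (ℓ : ℕ → ℚ)
    (hℓ : ∀ m, ℓ m = ∑ r ∈ m.divisors, ((ArithmeticFunction.moebius (m / r) : ℤ) : ℚ) * L r)
    (ℓc : Fin s → ℕ → ℚ)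
    (hℓc : ∀ i m, ℓc i m =
      ∑ r ∈ m.divisors, ((ArithmeticFunction.moebius (m / r) : ℤ) : ℚ) * Lc i r) :
    (∀ m, 1 ≤ m → ℓ (s * m) = ∑ j : Fin s, ℓc j (s * m)) ∧
    (∀ m, 1 < m → ¬ s ∣ m → ℓ m = 0) :=
  stmt7_general s N σ hσ V A F hF L hL Lc hLc ℓ hℓ ℓc hℓc
end

section
/- Dold coefficients of a permutative squared-by-blocks map on a wedge sum: in the permutative algebraic model, for every m > 1 one has ℓ(f^m) = ∑_{j=1}^q 𝟙_{s_j}(m) · (∑_{i∈Λ_j} ℓ(f_ii^m)), where 𝟙_{s_j}(m) = 1 if s_j divides m and 𝟙_{s_j}(m) = 0 otherwise; moreover ℓ(f^1) = L(f^1). -/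
/-!
Taking traces blockwise, `L(f^r) - 1 = ∑ᵢ (L(f_ii^r) - 1)`, and for `m ≠ 1` the Möbius sum
`∑_{r ∣ m} μ(m/r)` vanishes, so constants disappear from Dold coefficients and
`ℓ(f^m) = ∑ᵢ ℓ(f_ii^m)`. Since `F_k` moves the block `i` to the block `σ i`, the diagonal block
of `F_k^r` at `i` is zero unless the orbit length `s_j` of `i` divides `r`. If `s_j ∤ m` this
happens for no divisor `r` of `m`, so `L(f_ii^r) = 1` for all `r ∣ m` and `ℓ(f_ii^m) = 0`.
-/

open Finset Function

theorem Finset.sum_univ_eq_sum_sum_of_cover {ι κ M : Type*} [Fintype ι] [Fintype κ]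
    [DecidableEq ι] [AddCommMonoid M] {t : κ → Finset ι} (hcover : ∀ i, ∃ j, i ∈ t j)
    (hdisj : ∀ j j', j ≠ j' → Disjoint (t j) (t j')) (f : ι → M) :
    ∑ i, f i = ∑ j, ∑ i ∈ t j, f i := by
  rw [← sum_biUnion fun j _ j' _ h => hdisj j j' h]
  congr
  ext i
  simpa using hcover i

theorem Equiv.Perm.card_eq_minimalPeriod_of_mem_iff {α : Type*} [Finite α] [DecidableEq α]
    (σ : Equiv.Perm α) {i : α} {s : Finset α} (hs : ∀ i', i' ∈ s ↔ ∃ m : ℕ, (σ ^ m) i = i') :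
    #s = minimalPeriod σ i := by
  have hi : i ∈ periodicPts σ := σ.injective.mem_periodicPts i
  have hs_eq : s = ((List.range (minimalPeriod σ i)).map fun n => σ^[n] i).toFinset := by
    ext i'
    rw [hs, List.mem_toFinset, ← Cycle.mem_coe_iff, ← periodicOrbit_def, mem_periodicOrbit_iff hi]
    simp only [Equiv.Perm.coe_pow]
  rw [hs_eq, List.toFinset_card_of_nodup nodup_periodicOrbit, List.length_map, List.length_range]

theorem Equiv.Perm.pow_apply_eq_self_iff_minimalPeriod_dvd {α : Type*} (σ : Equiv.Perm α)
    (x : α) (n : ℕ) : (σ ^ n) x = x ↔ minimalPeriod σ x ∣ n := by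
  rw [← isPeriodicPt_iff_minimalPeriod_dvd, IsPeriodicPt, IsFixedPt, Equiv.Perm.coe_pow]

theorem LinearMap.trace_pi {R ι : Type*} [CommRing R] [Fintype ι] [DecidableEq ι]
    {M : ι → Type*} [∀ i, AddCommGroup (M i)] [∀ i, Module R (M i)]
    [∀ i, Module.Free R (M i)] [∀ i, Module.Finite R (M i)] (f : Module.End R (Π i, M i)) :
    trace R (Π i, M i) f = ∑ i, trace R (M i) (proj i ∘ₗ f ∘ₗ single R M i) := by
  let b i := Module.Free.chooseBasis R (M i)
  rw [trace_eq_matrix_trace R (Pi.basis b), Matrix.trace, ← univ_sigma_univ, sum_sigma]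
  refine sum_congr rfl fun i _ => ?_
  rw [trace_eq_matrix_trace R (b i), Matrix.trace]
  refine sum_congr rfl fun x _ => ?_
  simp [toMatrix_apply, Pi.basis_apply]

section BlockPermutation

variable {R ι : Type*} [Semiring R] [DecidableEq ι] {σ : Equiv.Perm ι} {M : ι → Type*}
  [∀ i, AddCommMonoid (M i)] [∀ i, Module R (M i)] {F : Module.End R (Π i, M i)}

theorem exists_pow_apply_single_eq_single_perm_pow
    (hF : ∀ i (v : M i), ∃ w, F (Pi.single i v) = Pi.single (σ i) w) (r : ℕ) (i : ι) (v : M i) :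
    ∃ w, (F ^ r) (Pi.single i v) = Pi.single ((σ ^ r) i) w := by
  induction r with
  | zero => exact ⟨v, rfl⟩
  | succ r ih =>
    obtain ⟨w, hw⟩ := ih
    obtain ⟨w', hw'⟩ := hF _ w
    rw [pow_succ' σ, Equiv.Perm.mul_apply]
    exact ⟨w', by rw [pow_succ', Module.End.mul_apply, hw, hw']⟩

theorem proj_comp_pow_comp_single_eq_zero
    (hF : ∀ i (v : M i), ∃ w, F (Pi.single i v) = Pi.single (σ i) w) {r : ℕ} {i : ι}
    (h : (σ ^ r) i ≠ i) : LinearMap.proj i ∘ₗ (F ^ r) ∘ₗ LinearMap.single R M i = 0 := by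
  ext v : 1
  obtain ⟨w, hw⟩ := exists_pow_apply_single_eq_single_perm_pow hF r i v
  simp [hw, Pi.single_eq_of_ne h.symm]

end BlockPermutation

section DoldCoefficient

variable {R : Type*} [Ring R]

def doldCoeff (f : ℕ → R) (m : ℕ) : R :=
  ∑ r ∈ m.divisors, ((ArithmeticFunction.moebius (m / r) : ℤ) : R) * f r

theorem sum_divisors_moebius_div_eq_zero {m : ℕ} (hm : m ≠ 1) :
    ∑ r ∈ m.divisors, ((ArithmeticFunction.moebius (m / r) : ℤ) : R) = 0 := by
  rw [← Int.cast_sum, Nat.sum_div_divisors, ← ArithmeticFunction.coe_mul_zeta_apply,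
    ArithmeticFunction.moebius_mul_coe_zeta, ArithmeticFunction.one_apply_ne hm, Int.cast_zero]

theorem doldCoeff_one (f : ℕ → R) : doldCoeff f 1 = f 1 := by
  simp [doldCoeff]

theorem doldCoeff_sub_const {m : ℕ} (hm : m ≠ 1) (f : ℕ → R) (c : R) :
    doldCoeff (fun r => f r - c) m = doldCoeff f m := by
  simp only [doldCoeff, mul_sub, sum_sub_distrib, ← sum_mul, sum_divisors_moebius_div_eq_zero hm,
    zero_mul, sub_zero]

theorem doldCoeff_sum {κ : Type*} (s : Finset κ) (f : κ → ℕ → R) (m : ℕ) :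
    doldCoeff (fun r => ∑ i ∈ s, f i r) m = ∑ i ∈ s, doldCoeff (f i) m := by
  simp only [doldCoeff, mul_sum]
  exact sum_comm

theorem doldCoeff_eq_zero_of_forall_dvd_eq {m : ℕ} (hm : m ≠ 1) {f : ℕ → R} {c : R}
    (h : ∀ r, r ∣ m → f r = c) : doldCoeff f m = 0 := by
  rw [← doldCoeff_sub_const hm f c]
  exact sum_eq_zero fun r hr => by simp [h r (Nat.dvd_of_mem_divisors hr)]

end DoldCoefficient

theorem stmt10_general (s N q : ℕ)
(σ : Equiv.Perm (Fin s))
    (Λ : Fin q → Finset (Fin s))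
    (hΛorb : ∀ j, ∀ i ∈ Λ j, ∀ i', i' ∈ Λ j ↔ ∃ m : ℕ, (σ ^ m) i = i')
    (hΛcover : ∀ i, ∃ j, i ∈ Λ j)
    (hΛdisj : ∀ j j', j ≠ j' → Disjoint (Λ j) (Λ j'))
    (sVec : Fin q → ℕ) (hsVec : ∀ j, sVec j = (Λ j).card)
    (V : Fin s → Fin N → Type*)
    [∀ i k, AddCommGroup (V i k)] [∀ i k, Module ℚ (V i k)]
    [∀ i k, FiniteDimensional ℚ (V i k)]
    (A : ∀ i k, V i k →ₗ[ℚ] V (σ i) k)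
    (F : ∀ k, (Π i, V i k) →ₗ[ℚ] (Π i, V i k))
    (hF : ∀ k (i : Fin s) (v : V i k), F k (Pi.single i v) = Pi.single (σ i) (A i k v))
    (L : ℕ → ℚ)
    (hL : ∀ m, L m =
      1 + ∑ k : Fin N, (-1 : ℚ) ^ ((k : ℕ) + 1) *
        LinearMap.trace ℚ (Π i, V i k) ((F k) ^ m))
    (Lc : Fin s → ℕ → ℚ)
    (hLc : ∀ i m, Lc i m =
      1 + ∑ k : Fin N, (-1 : ℚ) ^ ((k : ℕ) + 1) *
        LinearMap.trace ℚ (V i k)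
          ((LinearMap.proj i) ∘ₗ ((F k) ^ m) ∘ₗ (LinearMap.single ℚ (fun j => V j k) i)))
    (ℓ : ℕ → ℚ)
    (hℓ : ∀ m, ℓ m = ∑ r ∈ m.divisors, ((ArithmeticFunction.moebius (m / r) : ℤ) : ℚ) * L r)
    (ℓc : Fin s → ℕ → ℚ)
    (hℓc : ∀ i m, ℓc i m =
      ∑ r ∈ m.divisors, ((ArithmeticFunction.moebius (m / r) : ℤ) : ℚ) * Lc i r) :
    (∀ m, 1 < m → ℓ m =
      ∑ j : Fin q, (if sVec j ∣ m then (1 : ℚ) else 0) * (∑ i ∈ Λ j, ℓc i m)) ∧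
    ℓ 1 = L 1 := by
  change (∀ i m, ℓc i m = doldCoeff (Lc i) m) at hℓc
  change (∀ m, ℓ m = doldCoeff L m) at hℓ
  have hLc_eq_one : ∀ i r, (σ ^ r) i ≠ i → Lc i r = 1 := fun i r h => by
    simp [hLc, proj_comp_pow_comp_single_eq_zero (fun i v => ⟨_, hF _ i v⟩) h]
  have hL_sub_one : ∀ r, L r - 1 = ∑ i, (Lc i r - 1) := fun r => by
    simp only [hL, hLc, add_sub_cancel_left, LinearMap.trace_pi, mul_sum]
    exact sum_comm
  refine ⟨fun m hm => ?_, by rw [hℓ, doldCoeff_one]⟩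
  have hm1 : m ≠ 1 := hm.ne'
  have hℓ_eq_sum : ℓ m = ∑ i, ℓc i m := calc
    ℓ m = doldCoeff (fun r => L r - 1) m := (hℓ m).trans (doldCoeff_sub_const hm1 L 1).symm
    _ = ∑ i, doldCoeff (fun r => Lc i r - 1) m := by simp only [hL_sub_one, doldCoeff_sum]
    _ = ∑ i, ℓc i m := by simp only [doldCoeff_sub_const hm1, hℓc]
  have hℓc_eq_zero : ∀ j, ¬ sVec j ∣ m → ∀ i ∈ Λ j, ℓc i m = 0 := fun j hj i hi => by
    refine (hℓc i m).trans (doldCoeff_eq_zero_of_forall_dvd_eq hm1 fun r hr => hLc_eq_one i r ?_)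
    rw [Ne, σ.pow_apply_eq_self_iff_minimalPeriod_dvd,
      ← σ.card_eq_minimalPeriod_of_mem_iff (hΛorb j i hi), ← hsVec]
    exact fun hdvd => hj (hdvd.trans hr)
  rw [hℓ_eq_sum, sum_univ_eq_sum_sum_of_cover hΛcover hΛdisj]
  refine sum_congr rfl fun j _ => ?_
  split_ifs with h
  · rw [one_mul]
  · rw [zero_mul, sum_eq_zero (hℓc_eq_zero j h)]

/-- **Dold coefficients of a permutative squared-by-blocks map on a wedge sum.**
In the permutative algebraic model (`σ` a permutation of `{1,…,s}` with orbits
`Λ 1, …, Λ q` of cardinalities `s₁,…,s_q`; `F k` the block-permutation endomorphism of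
`⊕_i V i k` built from the maps `A i k : V i k → V (σ i) k`), with Lefschetz numbers
`L m = 1 + ∑_{k=1}^N (-1)^k tr(F_k^m)`,
`Lc i m = 1 + ∑_{k=1}^N (-1)^k tr(π_{i,k} ∘ F_k^m ∘ ι_{i,k})` and Dold coefficients
`ℓ(f^m) = ∑_{r∣m} μ(m/r)·L(f^r)`, `ℓ(f_ii^m) = ∑_{r∣m} μ(m/r)·L(f_ii^r)`:
for every `m > 1`, `ℓ(f^m) = ∑_{j=1}^q 𝟙_{s_j}(m)·(∑_{i∈Λ_j} ℓ(f_ii^m))` (with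
`𝟙_{s_j}(m) = 1` if `s_j ∣ m` and `0` otherwise), and moreover `ℓ(f^1) = L(f^1)`. -/
theorem stmt10 (s N q : ℕ) (hs : 1 ≤ s) (hN : 1 ≤ N)
(σ : Equiv.Perm (Fin s))
    (Λ : Fin q → Finset (Fin s))
    (hΛorb : ∀ j, ∀ i ∈ Λ j, ∀ i', i' ∈ Λ j ↔ ∃ m : ℕ, (σ ^ m) i = i')
    (hΛne : ∀ j, (Λ j).Nonempty)
    (hΛcover : ∀ i, ∃ j, i ∈ Λ j)
    (hΛdisj : ∀ j j', j ≠ j' → Disjoint (Λ j) (Λ j'))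
    (sVec : Fin q → ℕ) (hsVec : ∀ j, sVec j = (Λ j).card)
    (V : Fin s → Fin N → Type*)
    [∀ i k, AddCommGroup (V i k)] [∀ i k, Module ℚ (V i k)]
    [∀ i k, FiniteDimensional ℚ (V i k)]
    (hdim : ∀ (k : Fin N) (i i' : Fin s), (∃ m : ℕ, (σ ^ m) i = i') →
      Module.finrank ℚ (V i k) = Module.finrank ℚ (V i' k))
    (A : ∀ i k, V i k →ₗ[ℚ] V (σ i) k)
    (F : ∀ k, (Π i, V i k) →ₗ[ℚ] (Π i, V i k))
    (hF : ∀ k (i : Fin s) (v : V i k), F k (Pi.single i v) = Pi.single (σ i) (A i k v))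
    (L : ℕ → ℚ)
    (hL : ∀ m, L m =
      1 + ∑ k : Fin N, (-1 : ℚ) ^ ((k : ℕ) + 1) *
        LinearMap.trace ℚ (Π i, V i k) ((F k) ^ m))
    (Lc : Fin s → ℕ → ℚ)
    (hLc : ∀ i m, Lc i m =
      1 + ∑ k : Fin N, (-1 : ℚ) ^ ((k : ℕ) + 1) *
        LinearMap.trace ℚ (V i k)
          ((LinearMap.proj i) ∘ₗ ((F k) ^ m) ∘ₗ (LinearMap.single ℚ (fun j => V j k) i)))
    (ℓ : ℕ → ℚ)
    (hℓ : ∀ m, ℓ m = ∑ r ∈ m.divisors, ((ArithmeticFunction.moebius (m / r) : ℤ) : ℚ) * L r)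
    (ℓc : Fin s → ℕ → ℚ)
    (hℓc : ∀ i m, ℓc i m =
      ∑ r ∈ m.divisors, ((ArithmeticFunction.moebius (m / r) : ℤ) : ℚ) * Lc i r) :
    (∀ m, 1 < m → ℓ m =
      ∑ j : Fin q, (if sVec j ∣ m then (1 : ℚ) else 0) * (∑ i ∈ Λ j, ℓc i m)) ∧
    ℓ 1 = L 1 :=
  stmt10_general s N q σ Λ hΛorb hΛcover hΛdisj sVec hsVec V A F hF L hL Lc hLc ℓ hℓ ℓc hℓc
end

section
/- Algebraic periods of the wedge map are controlled by those of the coordinate maps: in the permutative algebraic model, every m > 1 belonging to APer_L(f) belongs to APer_L(f_ii) for some i ∈ {1,…,s}; equivalently, APer_L(f) ⊆ {1} ∪ ⋃_{i=1}^s APer_L(f_ii). -/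
/-!
Summing the coordinate Lefschetz numbers over `i` sums the diagonal blocks of each `F_k^r`,
i.e. gives its trace, so `∑ᵢ L(f_ii^r) = L(f^r) + (s - 1)`. The constant `s - 1` is killed by
the Möbius transform at every `m > 1`, hence `∑ᵢ ℓ(f_ii^m) = ℓ(f^m)`, and a nonzero sum has
a nonzero term.
-/

open Finset

namespace ArithmeticFunction

theorem sum_divisors_moebius_div_eq_zero {R : Type*} [Ring R] {m : ℕ} (hm : m ≠ 1) :
    ∑ r ∈ m.divisors, ((moebius (m / r) : ℤ) : R) = 0 := by
  have h := congrArg (· m) (coe_moebius_mul_coe_zeta (R := R))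
  simp only [coe_mul_zeta_apply, intCoe_apply, one_apply_ne hm] at h
  rwa [Nat.sum_div_divisors m fun d => ((moebius d : ℤ) : R)]

theorem sum_divisors_moebius_div_mul_add_const {R : Type*} [Ring R] {m : ℕ} (hm : m ≠ 1)
    (f : ℕ → R) (c : R) :
    ∑ r ∈ m.divisors, ((moebius (m / r) : ℤ) : R) * (f r + c) =
      ∑ r ∈ m.divisors, ((moebius (m / r) : ℤ) : R) * f r := by
  simp only [mul_add, sum_add_distrib, ← sum_mul, sum_divisors_moebius_div_eq_zero hm,
    zero_mul, add_zero]

end ArithmeticFunction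

namespace LinearMap

theorem trace_pi_eq_sum_trace_proj_comp_single {R ι : Type*} [CommRing R] [Fintype ι]
    [DecidableEq ι] (φ : ι → Type*) [∀ i, AddCommGroup (φ i)] [∀ i, Module R (φ i)]
    [∀ i, Module.Free R (φ i)] [∀ i, Module.Finite R (φ i)] (G : (Π i, φ i) →ₗ[R] (Π i, φ i)) :
    trace R (Π i, φ i) G = ∑ i, trace R (φ i) (proj i ∘ₗ G ∘ₗ single R φ i) := by
  have hid : ∑ i, single R φ i ∘ₗ proj i = LinearMap.id := by
    ext v j
    simp [Finset.sum_apply]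
  calc trace R (Π i, φ i) G
      = trace R (Π i, φ i) ((∑ i, single R φ i ∘ₗ proj i) ∘ₗ G) := by rw [hid, id_comp]
    _ = ∑ i, trace R (Π i, φ i) (single R φ i ∘ₗ (proj i ∘ₗ G)) := by
        rw [← map_sum]
        congr 1
        refine LinearMap.ext fun v => ?_
        simp only [comp_apply, sum_apply]
    _ = ∑ i, trace R (φ i) (proj i ∘ₗ G ∘ₗ single R φ i) := by
        refine sum_congr rfl fun i _ => ?_
        rw [trace_comp_comm', comp_assoc]

end LinearMap

theorem stmt13_general (s N : ℕ)
    (V : Fin s → Fin N → Type*)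
    [∀ i k, AddCommGroup (V i k)] [∀ i k, Module ℚ (V i k)]
    [∀ i k, FiniteDimensional ℚ (V i k)]
    (F : ∀ k, (Π i, V i k) →ₗ[ℚ] (Π i, V i k))
    (L : ℕ → ℚ)
    (hL : ∀ m, L m =
      1 + ∑ k : Fin N, (-1 : ℚ) ^ ((k : ℕ) + 1) *
        LinearMap.trace ℚ (Π i, V i k) ((F k) ^ m))
    (Lc : Fin s → ℕ → ℚ)
    (hLc : ∀ i m, Lc i m =
      1 + ∑ k : Fin N, (-1 : ℚ) ^ ((k : ℕ) + 1) *
        LinearMap.trace ℚ (V i k)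
          ((LinearMap.proj i) ∘ₗ ((F k) ^ m) ∘ₗ (LinearMap.single ℚ (fun j => V j k) i)))
    (ℓ : ℕ → ℚ)
    (hℓ : ∀ m, ℓ m = ∑ r ∈ m.divisors, ((ArithmeticFunction.moebius (m / r) : ℤ) : ℚ) * L r)
    (ℓc : Fin s → ℕ → ℚ)
    (hℓc : ∀ i m, ℓc i m =
      ∑ r ∈ m.divisors, ((ArithmeticFunction.moebius (m / r) : ℤ) : ℚ) * Lc i r) :
    ∀ m, 1 < m → ℓ m ≠ 0 → ∃ i : Fin s, ℓc i m ≠ 0 := by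
  intro m hm hℓm
  have sum_Lc : ∀ r, ∑ i, Lc i r = L r + ((s : ℚ) - 1) := by
    intro r
    simp only [hLc, hL, sum_add_distrib, sum_const, card_univ, Fintype.card_fin, nsmul_eq_mul,
      mul_one]
    rw [sum_comm]
    simp only [← mul_sum, ← LinearMap.trace_pi_eq_sum_trace_proj_comp_single]
    ring
  have sum_ℓc : ∑ i, ℓc i m = ℓ m := by
    simp only [hℓc, hℓ]
    rw [sum_comm]
    simp only [← mul_sum, sum_Lc]
    exact ArithmeticFunction.sum_divisors_moebius_div_mul_add_const hm.ne' L _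
  obtain ⟨i, -, hi⟩ := exists_ne_zero_of_sum_ne_zero (sum_ℓc ▸ hℓm)
  exact ⟨i, hi⟩

/-- **Algebraic periods of the wedge map are controlled by those of the coordinate maps.**
In the permutative algebraic model (`σ` a permutation of `{1,…,s}` with orbits
`Λ 1, …, Λ q`; `F k` the block-permutation endomorphism of `⊕_i V i k` built from the
maps `A i k : V i k → V (σ i) k`), with Lefschetz numbers `L`, coordinate Lefschetz
numbers `Lc` and Dold coefficients `ℓ`, `ℓc` as below: every `m > 1` with
`ℓ(f^m) ≠ 0` (i.e. `m ∈ APer_L(f)`) satisfies `ℓ(f_ii^m) ≠ 0` for some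
`i ∈ {1,…,s}` (i.e. `m ∈ APer_L(f_ii)`); equivalently
`APer_L(f) ⊆ {1} ∪ ⋃_{i=1}^s APer_L(f_ii)`. -/
theorem stmt13 (s N q : ℕ) (hs : 1 ≤ s) (hN : 1 ≤ N)
(σ : Equiv.Perm (Fin s))
    (Λ : Fin q → Finset (Fin s))
    (hΛorb : ∀ j, ∀ i ∈ Λ j, ∀ i', i' ∈ Λ j ↔ ∃ m : ℕ, (σ ^ m) i = i')
    (hΛne : ∀ j, (Λ j).Nonempty)
    (hΛcover : ∀ i, ∃ j, i ∈ Λ j)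
    (hΛdisj : ∀ j j', j ≠ j' → Disjoint (Λ j) (Λ j'))
    (sVec : Fin q → ℕ) (hsVec : ∀ j, sVec j = (Λ j).card)
    (V : Fin s → Fin N → Type*)
    [∀ i k, AddCommGroup (V i k)] [∀ i k, Module ℚ (V i k)]
    [∀ i k, FiniteDimensional ℚ (V i k)]
    (hdim : ∀ (k : Fin N) (i i' : Fin s), (∃ m : ℕ, (σ ^ m) i = i') →
      Module.finrank ℚ (V i k) = Module.finrank ℚ (V i' k))
    (A : ∀ i k, V i k →ₗ[ℚ] V (σ i) k)
    (F : ∀ k, (Π i, V i k) →ₗ[ℚ] (Π i, V i k))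
    (hF : ∀ k (i : Fin s) (v : V i k), F k (Pi.single i v) = Pi.single (σ i) (A i k v))
    (L : ℕ → ℚ)
    (hL : ∀ m, L m =
      1 + ∑ k : Fin N, (-1 : ℚ) ^ ((k : ℕ) + 1) *
        LinearMap.trace ℚ (Π i, V i k) ((F k) ^ m))
    (Lc : Fin s → ℕ → ℚ)
    (hLc : ∀ i m, Lc i m =
      1 + ∑ k : Fin N, (-1 : ℚ) ^ ((k : ℕ) + 1) *
        LinearMap.trace ℚ (V i k)
          ((LinearMap.proj i) ∘ₗ ((F k) ^ m) ∘ₗ (LinearMap.single ℚ (fun j => V j k) i)))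
    (ℓ : ℕ → ℚ)
    (hℓ : ∀ m, ℓ m = ∑ r ∈ m.divisors, ((ArithmeticFunction.moebius (m / r) : ℤ) : ℚ) * L r)
    (ℓc : Fin s → ℕ → ℚ)
    (hℓc : ∀ i m, ℓc i m =
      ∑ r ∈ m.divisors, ((ArithmeticFunction.moebius (m / r) : ℤ) : ℚ) * Lc i r) :
    ∀ m, 1 < m → ℓ m ≠ 0 → ∃ i : Fin s, ℓc i m ≠ 0 :=
  stmt13_general s N V F L hL Lc hLc ℓ hℓ ℓc hℓc
end

section
/- A permutative self-map of a wedge sum of at least two tori whose coordinate maps have nonzero eigenvalues is not Lefschetz periodic point free: let n ≥ 1 and s ≥ 2 be integers, σ a permutation of {1,…,s}, and A₁,…,A_s integer n×n matrices with det(A_i) ≠ 0 for every i. Define, for m ≥ 1, L(f^m) := 1 + ∑_{i : σ^m(i) = i} ( det(I_n − A_{σ^{m−1}(i)} ⋯ A_{σ(i)}·A_i) − 1 ). Then there exists m ≥ 1 with L(f^m) ≠ 0. -/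
/-! Let `r` be the order of `σ` and `B i = P i r`. For `m = c r` every index is fixed by `σ ^ m`
and the return matrices are the powers `B i ^ c`. Choose a prime `p` not dividing
`(s - 1) ∏ i, det (B i)`: modulo `p` every `B i` is invertible, so `B i ^ c = 1` once `c` is the
order of `GL_n(𝔽_p)`. Then each `det (1 - B i ^ c)` vanishes modulo `p`, and
`L(f^m) ≡ 1 - s ≢ 0 (mod p)`. -/

theorem Int.exists_prime_intCast_ne_zero {D : ℤ} (hD : D ≠ 0) :
    ∃ p : ℕ, p.Prime ∧ (D : ZMod p) ≠ 0 := by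
  obtain ⟨p, hle, hp⟩ := Nat.exists_infinite_primes (D.natAbs + 1)
  refine ⟨p, hp, fun hdvd => ?_⟩
  rw [ZMod.intCast_zmod_eq_zero_iff_dvd] at hdvd
  have := Nat.le_of_dvd (Int.natAbs_pos.mpr hD) (Int.natCast_dvd.mp hdvd)
  omega

theorem Matrix.det_one_sub_pow_card_units {ι R : Type*} [Fintype ι] [DecidableEq ι] [Nonempty ι]
    [CommRing R] [Finite R] {M : Matrix ι ι R} (hM : IsUnit M.det) :
    (1 - M ^ Nat.card (Matrix ι ι R)ˣ).det = 0 := by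
  obtain ⟨u, rfl⟩ := (Matrix.isUnit_iff_isUnit_det M).mpr hM
  rw [← Units.val_pow_eq_pow_val, pow_card_eq_one', Units.val_one, sub_self, det_zero]

theorem Matrix.intCast_det_one_sub_pow_card_units {κ R : Type*} [Fintype κ] [DecidableEq κ]
    [Nonempty κ] [CommRing R] [Finite R] {B : Matrix κ κ ℤ} (hB : IsUnit (B.det : R)) :
    ((1 - B ^ Nat.card (Matrix κ κ R)ˣ).det : R) = 0 := by
  have hcast := RingHom.map_det (Int.castRingHom R) (1 - B ^ Nat.card (Matrix κ κ R)ˣ)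
  rw [map_sub, map_one, map_pow] at hcast
  rw [← eq_intCast (Int.castRingHom R), hcast, det_one_sub_pow_card_units]
  rwa [← RingHom.map_det, eq_intCast]

section ReturnMatrix

variable {ι R : Type*} [Monoid R] {σ : Equiv.Perm ι} {A : ι → R} {P : ι → ℕ → R}

theorem returnMatrix_add (hP0 : ∀ i, P i 0 = 1)
    (hPsucc : ∀ i m, P i (m + 1) = A ((σ ^ m) i) * P i m) (i : ι) (a b : ℕ) :
    P i (a + b) = P ((σ ^ a) i) b * P i a := by
  induction b with
  | zero => simp [hP0]
  | succ b ih =>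
    rw [← add_assoc, hPsucc, ih, hPsucc, mul_assoc, ← Equiv.Perm.mul_apply, ← pow_add, add_comm b]

theorem returnMatrix_mul_of_pow_eq_one (hP0 : ∀ i, P i 0 = 1)
    (hPsucc : ∀ i m, P i (m + 1) = A ((σ ^ m) i) * P i m) {r : ℕ} (hr : σ ^ r = 1) (i : ι) (k : ℕ) :
    P i (k * r) = P i r ^ k := by
  induction k with
  | zero => simp [hP0]
  | succ k ih =>
    rw [add_mul, one_mul, returnMatrix_add hP0 hPsucc, pow_mul', hr, one_pow, ih, pow_succ',
      Equiv.Perm.one_apply]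

end ReturnMatrix

theorem det_returnMatrix {ι κ R : Type*} [Fintype κ] [DecidableEq κ] [CommRing R]
    {σ : Equiv.Perm ι} {A : ι → Matrix κ κ R} {P : ι → ℕ → Matrix κ κ R}
    (hP0 : ∀ i, P i 0 = 1) (hPsucc : ∀ i m, P i (m + 1) = A ((σ ^ m) i) * P i m) (i : ι) (m : ℕ) :
    (P i m).det = ∏ j ∈ Finset.range m, (A ((σ ^ j) i)).det := by
  induction m with
  | zero => simp [hP0]
  | succ m ih => rw [hPsucc, Matrix.det_mul, ih, Finset.prod_range_succ, mul_comm]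

/-- **A permutative self-map of a wedge sum of at least two tori whose coordinate maps have
nonzero eigenvalues is not Lefschetz periodic point free.**
Algebraic model: `A i` is the integer `n×n` matrix induced on `H₁(T^n; ℤ) ≅ ℤ^n` by the
coordinate map `f_{iσ(i)} : T^n → T^n` of a continuous permutative self-map `f` of the wedge
sum of `s` copies of `T^n` with permutation `σ`, and `det (A i) ≠ 0` says all eigenvalues
are nonzero.  Here `P i m = A_{σ^{m−1}(i)} ⋯ A_{σ(i)} · A_i` is the matrix induced on `H₁`
by the `m`-th return map, and the `m`-th Lefschetz number is
`L(f^m) = 1 + ∑_{i : σ^m(i)=i} (det(I_n − P i m) − 1)`.  Then some `L(f^m)`, `m ≥ 1`, is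
nonzero, i.e. `f` is not Lefschetz periodic point free. -/
theorem stmt15 (n s : ℕ) (hn : 1 ≤ n) (hs : 2 ≤ s)
    (σ : Equiv.Perm (Fin s))
    (A : Fin s → Matrix (Fin n) (Fin n) ℤ)
    (hA : ∀ i, (A i).det ≠ 0)
    (P : Fin s → ℕ → Matrix (Fin n) (Fin n) ℤ)
    (hP0 : ∀ i, P i 0 = 1)
    (hPsucc : ∀ i m, P i (m + 1) = A ((σ ^ m) i) * P i m)
    (L : ℕ → ℤ)
    (hL : ∀ m, L m =
      1 + ∑ i ∈ Finset.univ.filter (fun i : Fin s => (σ ^ m) i = i),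
        ((1 - P i m).det - 1)) :
    ∃ m, 1 ≤ m ∧ L m ≠ 0 := by
  set r := orderOf σ
  have hB : ∀ i, (P i r).det ≠ 0 := fun i => by
    rw [det_returnMatrix hP0 hPsucc]
    exact Finset.prod_ne_zero_iff.mpr fun j _ => hA _
  have hs1 : (s : ℤ) - 1 ≠ 0 := by omega
  obtain ⟨p, hp, hpD⟩ := Int.exists_prime_intCast_ne_zero
    (mul_ne_zero hs1 (Finset.prod_ne_zero_iff.mpr fun i (_ : i ∈ Finset.univ) => hB i))
  have : Fact p.Prime := ⟨hp⟩
  rw [Int.cast_mul, Int.cast_prod, mul_ne_zero_iff, Finset.prod_ne_zero_iff] at hpD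
  have : Nonempty (Fin n) := ⟨⟨0, hn⟩⟩
  set c := Nat.card (Matrix (Fin n) (Fin n) (ZMod p))ˣ
  refine ⟨c * r, Nat.mul_pos Nat.card_pos (orderOf_pos σ), fun hL0 => hpD.1 ?_⟩
  have hfix : Finset.univ.filter (fun i => (σ ^ (c * r)) i = i) = Finset.univ :=
    Finset.filter_true_of_mem fun i _ => by rw [pow_mul', pow_orderOf_eq_one, one_pow]; rfl
  have hdet : ∀ i, ((1 - P i (c * r)).det : ZMod p) = 0 := fun i => by
    rw [returnMatrix_mul_of_pow_eq_one hP0 hPsucc (pow_orderOf_eq_one σ)]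
    exact Matrix.intCast_det_one_sub_pow_card_units (hpD.2 i (Finset.mem_univ i)).isUnit
  calc (((s : ℤ) - 1 : ℤ) : ZMod p) = -((L (c * r) : ℤ) : ZMod p) := by
        simp only [hL, hfix, Int.cast_add, Int.cast_sum, Int.cast_sub, hdet, Int.cast_one,
          Finset.sum_const, Finset.card_univ, Fintype.card_fin, Int.cast_natCast, nsmul_eq_mul]
        ring
    _ = 0 := by rw [hL0, Int.cast_zero, neg_zero]
end
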